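/- arXiv:2210.10471 — 2 statements merged into one kernel-verified Lean document; each statement's English description precedes it below -/
import Mathlib

section
/- Let 𝒜 be an L-algebra on an infinite-dimensional real Banach space X. Then every operator S ∈ 𝔻 is closable as a densely defined operator on X: if (x_n) is a sequence in X^F with x_n → 0 in X and Sx_n → y in X, then y = 0. -/
open Filter Topology

noncomputable section

variable {X : Type*} [NormedAddCommGroup X] [NormedSpace ℝ X]

/-- A bounded operator is of finite rank if its range is finite-dimensional. -/
def FiniteRank (T : X →L[ℝ] X) : Prop :=
  FiniteDimensional ℝ (LinearMap.range (T : X →ₗ[ℝ] X))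

/-- Transitivity: every orbit of a nonzero vector is dense. -/
def IsTransitiveAlg (A : Set (X →L[ℝ] X)) : Prop :=
  ∀ x : X, x ≠ 0 → ∀ y : X, ∀ ε > 0, ∃ T ∈ A, ‖T x - y‖ < ε

/-- A set of operators is an "L-set" if it is transitive and contains
a nonzero finite-rank operator. -/
def IsLSet (A : Set (X →L[ℝ] X)) : Prop :=
  IsTransitiveAlg A ∧ ∃ T ∈ A, T ≠ 0 ∧ FiniteRank T

/-- `A^F`: the finite-rank elements of `A`. -/
def AF (A : Set (X →L[ℝ] X)) : Set (X →L[ℝ] X) :=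
  {T | T ∈ A ∧ FiniteRank T}

/-- `X^F = span {T x : T ∈ A^F, x ∈ X}`. -/
def XF (A : Set (X →L[ℝ] X)) : Submodule ℝ X :=
  Submodule.span ℝ {y | ∃ T ∈ AF A, ∃ x : X, T x = y}

lemma mapsto_XF {A : Set (X →L[ℝ] X)} {T : X →L[ℝ] X} (hT : T ∈ AF A) :
    ∀ x ∈ XF A, (T : X →ₗ[ℝ] X) x ∈ XF A :=
  fun x _ => Submodule.subset_span ⟨T, hT, x, rfl⟩

/-- `𝔻`: the algebra of all `ℝ`-linear endomorphisms of `X^F` commuting with the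
restriction to `X^F` of every operator in `A^F`. -/
def DD (A : Set (X →L[ℝ] X)) : Subalgebra ℝ (Module.End ℝ (XF A)) :=
  Subalgebra.centralizer ℝ
    {S | ∃ T : X →L[ℝ] X, ∃ hT : T ∈ AF A, S = (T : X →ₗ[ℝ] X).restrict (mapsto_XF hT)}

def RealType (A : Set (X →L[ℝ] X)) : Prop := Nonempty (DD A ≃ₐ[ℝ] ℝ)
def ComplexType (A : Set (X →L[ℝ] X)) : Prop := Nonempty (DD A ≃ₐ[ℝ] ℂ)
def QuaternionType (A : Set (X →L[ℝ] X)) : Prop := Nonempty (DD A ≃ₐ[ℝ] Quaternion ℝ)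

/-- `A` is dense: on any finite linearly independent family, elements of `A`
approximate arbitrary prescribed values. -/
def IsDenseAlg (A : Set (X →L[ℝ] X)) : Prop :=
  ∀ ε > 0, ∀ n : ℕ, ∀ x : Fin n → X, LinearIndependent ℝ x →
    ∀ y : Fin n → X, ∃ T ∈ A, ∀ i, ‖T (x i) - y i‖ < ε

/-- `A` is `(1/k)`-dense. -/
def IsFracDense (k : ℕ) (A : Set (X →L[ℝ] X)) : Prop :=
  ∀ ε > 0, ∀ n : ℕ, ∀ x : Fin (k * n) → X, LinearIndependent ℝ x →
    ∀ y : Fin n → X, ∃ j : Fin n → Fin (k * n), ∃ T ∈ A,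
      ∀ i, ‖y i - T (x (j i))‖ < ε

/-- `T` lies in the closure of `A` in the strong operator topology. -/
def InSOTClosure (A : Set (X →L[ℝ] X)) (T : X →L[ℝ] X) : Prop :=
  ∀ ε > 0, ∀ s : Finset X, ∃ S ∈ A, ∀ x ∈ s, ‖S x - T x‖ < ε

/-- Closure of `A` in the strong operator topology. -/
def SOTcl (A : Set (X →L[ℝ] X)) : Set (X →L[ℝ] X) := {T | InSOTClosure A T}

/-- `A` is closed in the strong operator topology. -/
def SOTClosed (A : Set (X →L[ℝ] X)) : Prop :=
  ∀ T : X →L[ℝ] X, InSOTClosure A T → T ∈ A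

/-- A Lomonosov set: transitive, SOT-closed, containing a nonzero compact operator. -/
def IsLomonosov (A : Set (X →L[ℝ] X)) : Prop :=
  IsTransitiveAlg A ∧ SOTClosed A ∧ ∃ T ∈ A, T ≠ 0 ∧ IsCompactOperator (⇑T)

/-- Similarity of operator algebras. -/
def SimilarAlg (A B : Set (X →L[ℝ] X)) : Prop :=
  ∃ T : X ≃L[ℝ] X,
    (fun S => (T : X →L[ℝ] X).comp (S.comp ((T.symm : X →L[ℝ] X)))) '' A = B

/-- A partial complex structure: a densely defined operator `S` with `S ∘ S = -1`
(equivalently `S⁻¹ = -S`) mapping its domain onto itself. -/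
structure PCS (X : Type*) [NormedAddCommGroup X] [NormedSpace ℝ X] where
  domain : Submodule ℝ X
  dense' : Dense (domain : Set X)
  map : domain →ₗ[ℝ] domain
  anti : ∀ x : domain, map (map x) = -x

/-- A PCS is closed if its graph is closed in `X × X`. -/
def PCSClosed (S : PCS X) : Prop :=
  IsClosed (Set.range fun x : S.domain => ((x : X), (S.map x : X)))

/-- The algebra `𝒜_S` of all bounded operators leaving `D(S)` invariant and
commuting with `S` on `D(S)`. -/
def AlgS (S : PCS X) : Set (X →L[ℝ] X) :=
  {T | ∀ x : S.domain, ∃ y : S.domain, (y : X) = T x ∧ T (S.map x : X) = (S.map y : X)}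

/-- A representation of the quaternion group `G_ℍ` by linear bijections of a dense
subspace of `X`, with `π(1) = id` and `π(-1) = -id`. -/
structure QRep (X : Type*) [NormedAddCommGroup X] [NormedSpace ℝ X] where
  domain : Submodule ℝ X
  dense' : Dense (domain : Set X)
  pi : QuaternionGroup 2 → Module.End ℝ domain
  pi_one : pi 1 = 1
  pi_mul : ∀ g h, pi (g * h) = pi g * pi h
  pi_neg_one : pi (QuaternionGroup.a 2) = -1

/-- The representation is closed. -/
def QRepClosed (ρ : QRep X) : Prop :=
  ∀ (x : ℕ → ρ.domain) (w : QuaternionGroup 2 → X),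
    (∀ g, Tendsto (fun n => (ρ.pi g (x n) : X)) atTop (𝓝 (w g))) →
    ∃ z : ρ.domain, ∀ g, w g = (ρ.pi g z : X)

/-- The representation is regular: the functionals bounded on the orbit of the
representation are weak*-dense in the dual. -/
def QRepRegular (ρ : QRep X) : Prop :=
  Dense ((StrongDual.toWeakDual) ''
    {f : StrongDual ℝ X |
      ∃ C > 0, ∀ g : QuaternionGroup 2, ∀ x : ρ.domain, |f (ρ.pi g x : X)| ≤ C * ‖(x : X)‖})

/-- The algebra `𝒜_π`. -/
def AlgPi (ρ : QRep X) : Set (X →L[ℝ] X) :=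
  {T | ∀ x : ρ.domain, ∃ y : ρ.domain, (y : X) = T x ∧
    ∀ g : QuaternionGroup 2, T (ρ.pi g x : X) = (ρ.pi g y : X)}

/-
Let `T ∈ 𝒜^F`. Since `S` commutes with `T` on `X^F`, `T (S xₙ) = S (T xₙ)`, and `T xₙ → 0` inside
the finite-dimensional space `range T ⊆ X^F`, on which `S` is automatically continuous; hence
`T y = lim T (S xₙ) = 0`. Apply this to `T = T₀ R` with `T₀ ∈ 𝒜^F` nonzero and `R ∈ 𝒜`: `T₀` vanishes
on the orbit `𝒜 y`, which is dense when `y ≠ 0` by transitivity, forcing `T₀ = 0`.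
-/

lemma FiniteRank.mul {T : X →L[ℝ] X} (hT : FiniteRank T) (R : X →L[ℝ] X) :
    FiniteRank (T * R) :=
  haveI : FiniteDimensional ℝ (LinearMap.range (T : X →ₗ[ℝ] X)) := hT
  Submodule.finiteDimensional_of_le
    (LinearMap.range_comp_le_range (R : X →ₗ[ℝ] X) (T : X →ₗ[ℝ] X))

lemma IsTransitiveAlg.dense_orbit {A : Set (X →L[ℝ] X)} (hA : IsTransitiveAlg A) {y : X}
    (hy : y ≠ 0) : Dense ((fun R : X →L[ℝ] X => R y) '' A) := by
  refine Metric.dense_iff.mpr fun z ε hε => ?_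
  obtain ⟨R, hR, hRz⟩ := hA y hy z ε hε
  exact ⟨R y, Metric.mem_ball.mpr (by rwa [dist_eq_norm]), R, hR, rfl⟩

lemma IsTransitiveAlg.eq_zero_of_forall_apply_mul_eq_zero {A : Set (X →L[ℝ] X)}
    (hA : IsTransitiveAlg A) {T : X →L[ℝ] X} (hT : T ≠ 0) {y : X}
    (h : ∀ R ∈ A, T (R y) = 0) : y = 0 := by
  by_contra hy
  refine hT (ContinuousLinearMap.ext fun z => ?_)
  have hT_eq : Set.EqOn T 0 ((fun R : X →L[ℝ] X => R y) '' A) := by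
    rintro _ ⟨R, hR, rfl⟩
    exact h R hR
  exact congrFun (T.continuous.ext_on (hA.dense_orbit hy) continuous_const hT_eq) z

section Commutant

variable {A : Set (X →L[ℝ] X)} {S : Module.End ℝ (XF A)} {T : X →L[ℝ] X}

lemma apply_coe_eq_coe_apply_of_mem_DD (hS : S ∈ DD A) (hT : T ∈ AF A) (x : XF A) :
    T (S x : X) = (S ((T : X →ₗ[ℝ] X).restrict (mapsto_XF hT) x) : X) := by
  have hcomm := (Subalgebra.mem_centralizer_iff ℝ).mp hS _ ⟨T, hT, rfl⟩
  exact congrArg Subtype.val (LinearMap.congr_fun hcomm x)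

lemma range_le_XF (hT : T ∈ AF A) : LinearMap.range (T : X →ₗ[ℝ] X) ≤ XF A := by
  rintro _ ⟨w, rfl⟩
  exact Submodule.subset_span ⟨T, hT, w, rfl⟩

lemma apply_eq_zero_of_tendsto_of_mem_DD (hS : S ∈ DD A) (hT : T ∈ AF A)
    {x : ℕ → XF A} {y : X} (hx : Tendsto (fun n => (x n : X)) atTop (𝓝 0))
    (hy : Tendsto (fun n => (S (x n) : X)) atTop (𝓝 y)) : T y = 0 := by
  have : FiniteDimensional ℝ (LinearMap.range (T : X →ₗ[ℝ] X)) := hT.2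
  let L : LinearMap.range (T : X →ₗ[ℝ] X) →ₗ[ℝ] X :=
    (XF A).subtype ∘ₗ S ∘ₗ Submodule.inclusion (range_le_XF hT)
  let v : ℕ → LinearMap.range (T : X →ₗ[ℝ] X) := fun n => ⟨T (x n), x n, rfl⟩
  have hv : Tendsto v atTop (𝓝 0) := by
    rw [tendsto_subtype_rng]
    simpa [Function.comp_def] using (T.continuous.tendsto 0).comp hx
  have hLv : Tendsto (fun n => L (v n)) atTop (𝓝 0) := by
    simpa [Function.comp_def] using (L.continuous_of_finiteDimensional.tendsto 0).comp hv
  have hLv_eq : ∀ n, L (v n) = T (S (x n) : X) := fun n =>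
    (apply_coe_eq_coe_apply_of_mem_DD hS hT (x n)).symm
  simp only [hLv_eq] at hLv
  exact tendsto_nhds_unique ((T.continuous.tendsto y).comp hy) hLv

end Commutant

theorem stmt6_general {X : Type*} [NormedAddCommGroup X] [NormedSpace ℝ X]
    (A : NonUnitalSubalgebra ℝ (X →L[ℝ] X))
    (hA : IsLSet (A : Set (X →L[ℝ] X))) :
    ∀ S ∈ DD (A : Set (X →L[ℝ] X)),
      ∀ (x : ℕ → XF (A : Set (X →L[ℝ] X))) (y : X),
        Tendsto (fun n => ((x n : X))) atTop (𝓝 0) →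
        Tendsto (fun n => ((S (x n) : X))) atTop (𝓝 y) → y = 0 := by
  intro S hS x y hx hy
  obtain ⟨hTrans, T₀, hT₀A, hT₀ne, hT₀fr⟩ := hA
  refine hTrans.eq_zero_of_forall_apply_mul_eq_zero hT₀ne fun R hR => ?_
  exact apply_eq_zero_of_tendsto_of_mem_DD hS ⟨mul_mem hT₀A hR, hT₀fr.mul R⟩ hx hy

/-- For an L-algebra `𝒜`, every operator `S ∈ 𝔻` is closable as a densely
defined operator on `X`: if `x_n → 0` in `X` with `x_n ∈ X^F` and `S x_n → y`, then `y = 0`. -/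
theorem stmt6 {X : Type*} [NormedAddCommGroup X] [NormedSpace ℝ X] [CompleteSpace X]
    (hinf : ¬ FiniteDimensional ℝ X)
    (A : NonUnitalSubalgebra ℝ (X →L[ℝ] X))
    (hA : IsLSet (A : Set (X →L[ℝ] X))) :
    ∀ S ∈ DD (A : Set (X →L[ℝ] X)),
      ∀ (x : ℕ → XF (A : Set (X →L[ℝ] X))) (y : X),
        Tendsto (fun n => ((x n : X))) atTop (𝓝 0) →
        Tendsto (fun n => ((S (x n) : X))) atTop (𝓝 y) → y = 0 :=
  stmt6_general A hA

end
end

section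
/- Every L-algebra 𝒜 of quaternion type on an infinite-dimensional real Banach space X is contained in the algebra 𝒜_π, for some closed and regular representation π of the quaternion group G_ℍ by linear bijections of a dense linear subspace E of X with π(1) = id_E and π(−1) = −id_E. -/
open Filter Topology

noncomputable section

variable {X : Type*} [NormedAddCommGroup X] [NormedSpace ℝ X]

/-!
Through `𝔻 ≅ ℍ` the quaternion group acts on `X^F` by operators `σ g` commuting with `𝒜^F`, and
by density of `X^F` then with all of `𝒜`. Let `Γ ⊆ X^{Q₈}` be the closure of the graph
`{(σ g x)_g : x ∈ X^F}`. For `T ∈ 𝒜^F` the map `x ↦ σ g (T x)` has finite rank, hence is bounded,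
and it equals `T ∘ σ g` on `X^F`; so along `Γ` the coordinate `T (v g)` is a continuous function of
`v 1`. As `𝒜^F` separates points, `v ↦ v 1` is injective on `Γ`, and `Γ` is the graph of a
representation `π` of `Q₈` on `E = {v 1 : v ∈ Γ}`, namely right translation of coordinates. It is
closed because `Γ` is; every `T ∈ 𝒜` acts coordinatewise on `Γ`, so `𝒜 ⊆ 𝒜_π`; and the
functionals `h ∘ T` with `T ∈ 𝒜^F` are bounded on `π`-orbits and separate points, so they are
weak-* dense.
-/

lemma mem_closure_of_forall_finset_exists_eqOn {ι Y : Type*} [TopologicalSpace Y]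
    {S : Set (ι → Y)} {f : ι → Y} (h : ∀ I : Finset ι, ∃ g ∈ S, ∀ i ∈ I, g i = f i) :
    f ∈ closure S := by
  classical
  choose g hgS hg using h
  have hg_tendsto : Tendsto g atTop (𝓝 f) := tendsto_pi_nhds.2 fun i =>
    tendsto_nhds_of_eventually_eq
      ((eventually_ge_atTop {i}).mono fun I hI => hg I i (hI (Finset.mem_singleton_self i)))
  exact mem_closure_of_tendsto hg_tendsto (Eventually.of_forall hgS)

section WeakDualDensity

variable {𝕜 E : Type*} [Field 𝕜] [TopologicalSpace 𝕜] [IsTopologicalRing 𝕜]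
  [AddCommGroup E] [Module 𝕜 E] [TopologicalSpace E]

lemma exists_mem_eqOn_of_separating {W : Submodule 𝕜 (StrongDual 𝕜 E)}
    (hW : ∀ v : E, v ≠ 0 → ∃ f ∈ W, f v ≠ 0) (F : StrongDual 𝕜 E)
    (V : Submodule 𝕜 E) [FiniteDimensional 𝕜 V] : ∃ f ∈ W, ∀ v ∈ V, f v = F v := by
  let r : StrongDual 𝕜 E →ₗ[𝕜] Module.Dual 𝕜 V := V.dualRestrict ∘ₗ ContinuousLinearMap.coeLM 𝕜
  have hsep : (W.map r).dualCoannihilator = ⊥ := by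
    refine (Submodule.eq_bot_iff _).2 fun v hv => ?_
    by_contra hv0
    obtain ⟨f, hf, hfv⟩ := hW v (by simpa using hv0)
    exact hfv ((Submodule.mem_dualCoannihilator _).1 hv (r f) ⟨f, hf, rfl⟩)
  have htop : W.map r = ⊤ := by
    rw [← Subspace.dualCoannihilator_dualAnnihilator_eq (W := W.map r), hsep,
      Submodule.dualAnnihilator_bot]
  obtain ⟨f, hf, hfF⟩ := (htop ▸ Submodule.mem_top : r F ∈ W.map r)
  exact ⟨f, hf, fun v hv => LinearMap.congr_fun hfF ⟨v, hv⟩⟩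

lemma dense_toWeakDual_of_separating {W : Submodule 𝕜 (StrongDual 𝕜 E)}
    (hW : ∀ v : E, v ≠ 0 → ∃ f ∈ W, f v ≠ 0) :
    Dense (StrongDual.toWeakDual '' (W : Set (StrongDual 𝕜 E))) := by
  have hemb : IsEmbedding fun (f : WeakDual 𝕜 E) (v : E) => topDualPairing 𝕜 E f v :=
    WeakBilin.isEmbedding ContinuousLinearMap.coe_injective
  intro F
  rw [hemb.closure_eq_preimage_closure_image]
  refine mem_closure_of_forall_finset_exists_eqOn fun I => ?_
  obtain ⟨f, hf, hfF⟩ := exists_mem_eqOn_of_separating hW (WeakDual.toStrongDual F)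
    (Submodule.span 𝕜 I)
  exact ⟨_, ⟨_, ⟨f, hf, rfl⟩, rfl⟩, fun v hv => hfF v (Submodule.subset_span hv)⟩

end WeakDualDensity

/-- The paper's `E*`. -/
def orbitBoundedDual {G : Type*} (E : Submodule ℝ X) (π : G → Module.End ℝ E) :
    Submodule ℝ (StrongDual ℝ X) where
  carrier := {f | ∃ C, ∀ g x, |f (π g x : X)| ≤ C * ‖(x : X)‖}
  zero_mem' := ⟨0, by simp⟩
  add_mem' := by
    rintro f f' ⟨C, hC⟩ ⟨C', hC'⟩
    refine ⟨C + C', fun g x => ?_⟩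
    calc |(f + f') (π g x : X)| ≤ |f (π g x : X)| + |f' (π g x : X)| := abs_add_le _ _
      _ ≤ (C + C') * ‖(x : X)‖ := by rw [add_mul]; exact add_le_add (hC g x) (hC' g x)
  smul_mem' := by
    rintro c f ⟨C, hC⟩
    refine ⟨|c| * C, fun g x => ?_⟩
    rw [smul_apply, smul_eq_mul, abs_mul, mul_assoc]
    exact mul_le_mul_of_nonneg_left (hC g x) (abs_nonneg c)

lemma QRepRegular.of_separating (ρ : QRep X)
    (h : ∀ v : X, v ≠ 0 → ∃ f ∈ orbitBoundedDual ρ.domain ρ.pi, f v ≠ 0) :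
    QRepRegular ρ := by
  refine (dense_toWeakDual_of_separating h).mono (Set.image_mono ?_)
  rintro f ⟨C, hC⟩
  refine ⟨max C 1, by positivity, fun g x => (hC g x).trans ?_⟩
  exact mul_le_mul_of_nonneg_right (le_max_left C 1) (norm_nonneg _)

lemma FiniteRank.mul_left (T : X →L[ℝ] X) {S : X →L[ℝ] X} (hS : FiniteRank S) :
    FiniteRank (T * S) := by
  have : FiniteDimensional ℝ (LinearMap.range (S : X →ₗ[ℝ] X)) := hS
  refine Submodule.finiteDimensional_of_le
    (S₂ := (LinearMap.range (S : X →ₗ[ℝ] X)).map (T : X →ₗ[ℝ] X)) ?_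
  rintro _ ⟨x, rfl⟩
  exact ⟨S x, ⟨x, rfl⟩, rfl⟩

lemma FiniteRank.mul_right {T : X →L[ℝ] X} (hT : FiniteRank T) (S : X →L[ℝ] X) :
    FiniteRank (T * S) := by
  have : FiniteDimensional ℝ (LinearMap.range (T : X →ₗ[ℝ] X)) := hT
  refine Submodule.finiteDimensional_of_le (S₂ := LinearMap.range (T : X →ₗ[ℝ] X)) ?_
  rintro _ ⟨x, rfl⟩
  exact ⟨S x, rfl⟩

lemma IsTransitiveAlg.exists_apply_mem {A : Set (X →L[ℝ] X)} (hA : IsTransitiveAlg A)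
    {x : X} (hx : x ≠ 0) {U : Set X} (hU : IsOpen U) (hne : U.Nonempty) :
    ∃ T ∈ A, T x ∈ U := by
  obtain ⟨y, hy⟩ := hne
  obtain ⟨ε, hε, hball⟩ := Metric.isOpen_iff.1 hU y hy
  obtain ⟨T, hT, hTx⟩ := hA x hx y ε hε
  exact ⟨T, hT, hball (by rwa [Metric.mem_ball, dist_eq_norm])⟩

section LAlgebra

variable {A : NonUnitalSubalgebra ℝ (X →L[ℝ] X)}

local notation "𝒜" => (A : Set (X →L[ℝ] X))

lemma mul_mem_AF_left {T S : X →L[ℝ] X} (hT : T ∈ A) (hS : S ∈ AF 𝒜) : T * S ∈ AF 𝒜 :=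
  ⟨A.mul_mem hT hS.1, hS.2.mul_left T⟩

lemma mul_mem_AF_right {T S : X →L[ℝ] X} (hT : T ∈ AF 𝒜) (hS : S ∈ A) : T * S ∈ AF 𝒜 :=
  ⟨A.mul_mem hT.1 hS, hT.2.mul_right S⟩

lemma apply_mem_XF {T : X →L[ℝ] X} (hT : T ∈ AF 𝒜) (x : X) : T x ∈ XF 𝒜 :=
  Submodule.subset_span ⟨T, hT, x, rfl⟩

lemma apply_mem_XF_of_mem {T : X →L[ℝ] X} (hT : T ∈ A) {x : X} (hx : x ∈ XF 𝒜) :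
    T x ∈ XF 𝒜 := by
  suffices XF 𝒜 ≤ (XF 𝒜).comap (T : X →ₗ[ℝ] X) from this hx
  refine Submodule.span_le.2 ?_
  rintro _ ⟨S, hS, y, rfl⟩
  exact apply_mem_XF (mul_mem_AF_left hT hS) y

lemma IsLSet.exists_mem_AF_apply_ne_zero (hA : IsLSet 𝒜) {v : X} (hv : v ≠ 0) :
    ∃ T ∈ AF 𝒜, T v ≠ 0 := by
  obtain ⟨T₀, hT₀, hT₀_ne, hT₀_fin⟩ := hA.2
  obtain ⟨y, hy⟩ := DFunLike.ne_iff.1 hT₀_ne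
  obtain ⟨R, hR, hRv⟩ := hA.1.exists_apply_mem hv
    (isOpen_compl_singleton.preimage T₀.continuous) ⟨y, hy⟩
  exact ⟨T₀ * R, mul_mem_AF_right ⟨hT₀, hT₀_fin⟩ hR, hRv⟩

lemma IsLSet.dense_XF (hA : IsLSet 𝒜) : Dense (XF 𝒜 : Set X) := by
  obtain ⟨T₀, hT₀, hT₀_ne, hT₀_fin⟩ := hA.2
  obtain ⟨x₀, hx₀⟩ := DFunLike.ne_iff.1 hT₀_ne
  refine dense_iff_inter_open.2 fun U hU hne => ?_
  obtain ⟨R, hR, hRx⟩ := hA.1.exists_apply_mem hx₀ hU hne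
  exact ⟨R (T₀ x₀), hRx, apply_mem_XF (mul_mem_AF_left hR ⟨hT₀, hT₀_fin⟩) x₀⟩

/-- `x ↦ D (T x)`, which is bounded because it factors through the finite-dimensional
range of `T`. -/
def boundedComp (D : Module.End ℝ (XF 𝒜)) {T : X →L[ℝ] X} (hT : T ∈ AF 𝒜) : X →L[ℝ] X :=
  haveI : FiniteDimensional ℝ (LinearMap.range (T : X →ₗ[ℝ] X)) := hT.2
  let toXF : LinearMap.range (T : X →ₗ[ℝ] X) →ₗ[ℝ] XF 𝒜 :=
    Submodule.inclusion (by rintro _ ⟨x, rfl⟩; exact apply_mem_XF hT x)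
  (LinearMap.toContinuousLinearMap ((XF 𝒜).subtype ∘ₗ D ∘ₗ toXF)).comp
    (T.codRestrict _ (LinearMap.mem_range_self _))

lemma boundedComp_apply (D : Module.End ℝ (XF 𝒜)) {T : X →L[ℝ] X} (hT : T ∈ AF 𝒜) (x : X) :
    boundedComp D hT x = D ⟨T x, apply_mem_XF hT x⟩ :=
  rfl

def restrictXF {T : X →L[ℝ] X} (hT : T ∈ A) : Module.End ℝ (XF 𝒜) :=
  (T : X →ₗ[ℝ] X).restrict fun _ => apply_mem_XF_of_mem hT

lemma commute_restrictXF_of_mem_AF {D : Module.End ℝ (XF 𝒜)} (hD : D ∈ DD 𝒜)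
    {T : X →L[ℝ] X} (hT : T ∈ AF 𝒜) : Commute D (restrictXF hT.1) :=
  ((Subalgebra.mem_centralizer_iff ℝ).1 hD _ ⟨T, hT, rfl⟩).symm

lemma boundedComp_mul (hA : IsLSet 𝒜) {D : Module.End ℝ (XF 𝒜)} (hD : D ∈ DD 𝒜)
    {T S : X →L[ℝ] X} (hT : T ∈ A) (hS : S ∈ AF 𝒜) :
    boundedComp D (mul_mem_AF_left hT hS) = T * boundedComp D hS := by
  refine ContinuousLinearMap.ext_on (s := XF 𝒜) (by simpa using hA.dense_XF) fun u hu => ?_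
  have hTS := LinearMap.congr_fun (commute_restrictXF_of_mem_AF hD (mul_mem_AF_left hT hS))
    ⟨u, hu⟩
  have hS' := LinearMap.congr_fun (commute_restrictXF_of_mem_AF hD hS) ⟨u, hu⟩
  calc boundedComp D (mul_mem_AF_left hT hS) u
      = T (S (D ⟨u, hu⟩)) := congrArg Subtype.val hTS
    _ = T (D ⟨S u, apply_mem_XF hS u⟩) := congrArg (fun y => T (Subtype.val y)) hS'.symm

lemma commute_restrictXF (hA : IsLSet 𝒜) {D : Module.End ℝ (XF 𝒜)} (hD : D ∈ DD 𝒜)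
    {T : X →L[ℝ] X} (hT : T ∈ A) : Commute D (restrictXF hT) := by
  refine LinearMap.ext_on Submodule.span_span_coe_preimage ?_
  rintro ⟨_, hy⟩ ⟨S, hS, x, rfl⟩
  exact Subtype.ext (congrArg (fun L : X →L[ℝ] X => L x) (boundedComp_mul hA hD hT hS))

end LAlgebra

namespace QuaternionGroup

open Quaternion

private def quatI : ℍ[ℝ] := ⟨0, 1, 0, 0⟩
private def quatJ : ℍ[ℝ] := ⟨0, 0, 1, 0⟩

private lemma quatI_mul_quatI : quatI * quatI = -1 := by
  ext <;> simp [re_mul, imI_mul, imJ_mul, imK_mul] <;> simp [quatI]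

private lemma quatJ_mul_quatJ : quatJ * quatJ = -1 := by
  ext <;> simp [re_mul, imI_mul, imJ_mul, imK_mul] <;> simp [quatJ]

private lemma quatI_mul_quatJ : quatI * quatJ = quatJ * quatI ^ 3 := by
  rw [pow_succ, sq, quatI_mul_quatI]
  ext <;> simp [re_mul, imI_mul, imJ_mul, imK_mul] <;> simp [quatI, quatJ]

private lemma quatI_pow_four : quatI ^ 4 = 1 := by
  rw [show 4 = 2 + 2 from rfl, pow_add, sq, quatI_mul_quatI, neg_one_mul, neg_neg]

private def quatPow (i : ZMod 4) : ℍ[ℝ] := quatI ^ i.val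

private lemma quatPow_add (i j : ZMod 4) : quatPow (i + j) = quatPow i * quatPow j := by
  rw [quatPow, ZMod.val_add, ← pow_eq_pow_mod _ quatI_pow_four, pow_add]; rfl

private lemma quatPow_two : quatPow 2 = -1 := by
  rw [quatPow, show (2 : ZMod 4).val = 2 from rfl, sq, quatI_mul_quatI]

private lemma quatPow_mul_quatJ (i : ZMod 4) : quatPow i * quatJ = quatJ * quatPow (-i) := by
  have h (n : ℕ) : quatI ^ n * quatJ = quatJ * quatI ^ (3 * n) := by
    induction n with
    | zero => simp
    | succ n ih =>
      rw [pow_succ', mul_assoc, ih, ← mul_assoc, quatI_mul_quatJ, mul_assoc, ← pow_add]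
      ring_nf
  rw [quatPow, h, show -i = 3 * i by revert i; decide, quatPow, ZMod.val_mul,
    ← pow_eq_pow_mod _ quatI_pow_four]
  rfl

/-- `Q₈` as the unit quaternions `±1, ±i, ±j, ±k`: `a n ↦ iⁿ`, `xa n ↦ j iⁿ`. -/
def toQuaternion : QuaternionGroup 2 →* ℍ[ℝ] where
  toFun
    | a i => quatPow i
    | xa i => quatJ * quatPow i
  map_one' := by rw [one_def]; exact pow_zero _
  map_mul' g h := by
    cases g <;> cases h <;> simp only [a_mul_a, a_mul_xa, xa_mul_a, xa_mul_xa]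
    case a.a i j => exact quatPow_add i j
    case a.xa i j =>
      rw [← mul_assoc, quatPow_mul_quatJ, mul_assoc, ← quatPow_add, neg_add_eq_sub]
    case xa.a i j => rw [mul_assoc, ← quatPow_add]
    case xa.xa i j =>
      rw [mul_assoc, ← mul_assoc (quatPow i), quatPow_mul_quatJ, ← mul_assoc, ← mul_assoc,
        quatJ_mul_quatJ, ← quatPow_two, mul_assoc, ← quatPow_add, ← quatPow_add]
      congr 1
      ring

lemma toQuaternion_a_two : toQuaternion (a 2) = -1 :=
  quatPow_two

end QuaternionGroup

section OrbitGraph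

variable {A : NonUnitalSubalgebra ℝ (X →L[ℝ] X)} {G : Type*} [Group G]
  (σ : G →* DD (A : Set (X →L[ℝ] X)))

local notation "𝒜" => (A : Set (X →L[ℝ] X))

/-- Its range is the graph of the action `σ` of `G` on `X^F`. -/
def orbitMap : XF 𝒜 →ₗ[ℝ] (G → X) :=
  LinearMap.pi fun g => (XF 𝒜).subtype ∘ₗ (σ g : Module.End ℝ (XF 𝒜))

lemma orbitMap_apply (x : XF 𝒜) (g : G) :
    orbitMap σ x g = ((σ g : Module.End ℝ (XF 𝒜)) x : X) :=
  rfl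

def closedOrbitGraph : Submodule ℝ (G → X) :=
  (LinearMap.range (orbitMap σ)).topologicalClosure

lemma orbitMap_mem_closedOrbitGraph (x : XF 𝒜) : orbitMap σ x ∈ closedOrbitGraph σ :=
  Submodule.le_topologicalClosure _ ⟨x, rfl⟩

lemma closedOrbitGraph_subset {C : Set (G → X)} (hC : IsClosed C)
    (h : ∀ x, orbitMap σ x ∈ C) : (closedOrbitGraph σ : Set (G → X)) ⊆ C :=
  closure_minimal (by rintro _ ⟨x, rfl⟩; exact h x) hC

lemma map_mem_closedOrbitGraph (L : (G → X) →L[ℝ] (G → X))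
    (hL : ∀ x, ∃ y, L (orbitMap σ x) = orbitMap σ y) {v : G → X}
    (hv : v ∈ closedOrbitGraph σ) : L v ∈ closedOrbitGraph σ :=
  closedOrbitGraph_subset σ (isClosed_closure.preimage L.continuous)
    (fun x => by
      obtain ⟨y, hy⟩ := hL x
      rw [Set.mem_preimage, hy]
      exact orbitMap_mem_closedOrbitGraph σ y) hv

lemma apply_eq_boundedComp {v : G → X} (hv : v ∈ closedOrbitGraph σ) (g : G)
    {T : X →L[ℝ] X} (hT : T ∈ AF 𝒜) : T (v g) = boundedComp (σ g) hT (v 1) := by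
  refine closedOrbitGraph_subset σ (C := {v | T (v g) = boundedComp (σ g) hT (v 1)})
    (isClosed_eq (by fun_prop) (by fun_prop)) (fun x => ?_) hv
  have := LinearMap.congr_fun (commute_restrictXF_of_mem_AF (σ g).2 hT) x
  simp only [Set.mem_ofPred_eq, orbitMap_apply, map_one, boundedComp_apply]
  exact (congrArg Subtype.val this).symm

lemma eq_zero_of_mem_closedOrbitGraph (hA : IsLSet 𝒜) {v : G → X}
    (hv : v ∈ closedOrbitGraph σ) (h1 : v 1 = 0) : v = 0 := by
  funext g
  by_contra hg
  obtain ⟨T, hT, hTv⟩ := hA.exists_mem_AF_apply_ne_zero hg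
  exact hTv (by rw [apply_eq_boundedComp σ hv g hT, h1, map_zero])

def rightShift (g : G) : (G → X) →L[ℝ] (G → X) :=
  ContinuousLinearMap.pi fun h => ContinuousLinearMap.proj (h * g)

lemma rightShift_apply (g : G) (v : G → X) (h : G) : rightShift g v h = v (h * g) :=
  rfl

lemma rightShift_orbitMap (g : G) (x : XF 𝒜) :
    rightShift g (orbitMap σ x) = orbitMap σ ((σ g : Module.End ℝ (XF 𝒜)) x) := by
  funext h
  simp only [rightShift_apply, orbitMap_apply, map_mul, Subalgebra.coe_mul, Module.End.mul_apply]

lemma rightShift_mem_closedOrbitGraph (g : G) {v : G → X} (hv : v ∈ closedOrbitGraph σ) :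
    rightShift g v ∈ closedOrbitGraph σ :=
  map_mem_closedOrbitGraph σ _ (fun x => ⟨_, rightShift_orbitMap σ g x⟩) hv

lemma rightShift_eq_neg {z : G} (hz : σ z = -1) {v : G → X} (hv : v ∈ closedOrbitGraph σ) :
    rightShift z v = -v := by
  refine closedOrbitGraph_subset σ (C := {v | rightShift z v = -v})
    (isClosed_eq (rightShift z).continuous continuous_neg) (fun x => ?_) hv
  simp only [Set.mem_ofPred_eq, rightShift_orbitMap, hz]
  funext h
  simp [orbitMap_apply]

lemma map_apply_mem_closedOrbitGraph (hA : IsLSet 𝒜) {T : X →L[ℝ] X} (hT : T ∈ A)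
    {v : G → X} (hv : v ∈ closedOrbitGraph σ) :
    (fun g => T (v g)) ∈ closedOrbitGraph σ := by
  refine map_mem_closedOrbitGraph σ (ContinuousLinearMap.piMap fun _ => T)
    (fun x => ⟨restrictXF hT x, funext fun g => ?_⟩) hv
  exact congrArg Subtype.val
    (LinearMap.congr_fun (commute_restrictXF hA (σ g).2 hT) x).symm

def evalOne : closedOrbitGraph σ →ₗ[ℝ] X :=
  (LinearMap.proj 1).comp (closedOrbitGraph σ).subtype

/-- The paper's dense domain `E`. -/
def orbitDomain : Submodule ℝ X := LinearMap.range (evalOne σ)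

lemma mem_orbitDomain {v : G → X} (hv : v ∈ closedOrbitGraph σ) : v 1 ∈ orbitDomain σ :=
  ⟨⟨v, hv⟩, rfl⟩

lemma XF_le_orbitDomain : XF 𝒜 ≤ orbitDomain σ := fun x hx => by
  simpa [orbitMap_apply] using mem_orbitDomain σ (orbitMap_mem_closedOrbitGraph σ ⟨x, hx⟩)

lemma evalOne_injective (hA : IsLSet 𝒜) : Function.Injective (evalOne σ) := by
  refine (injective_iff_map_eq_zero _).2 fun v hv => Subtype.ext ?_
  exact eq_zero_of_mem_closedOrbitGraph σ hA v.2 hv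

variable (hA : IsLSet (A : Set (X →L[ℝ] X)))

/-- The closed graph is itself a graph: it is parametrised by its first coordinate. -/
def orbitDomainEquiv : closedOrbitGraph σ ≃ₗ[ℝ] orbitDomain σ :=
  LinearEquiv.ofInjective _ (evalOne_injective σ hA)

lemma orbitDomainEquiv_apply (v : closedOrbitGraph σ) :
    (orbitDomainEquiv σ hA v : X) = (v : G → X) 1 :=
  rfl

lemma orbitDomainEquiv_symm_apply_one (x : orbitDomain σ) :
    ((orbitDomainEquiv σ hA).symm x : G → X) 1 = x := by
  rw [← orbitDomainEquiv_apply σ hA, LinearEquiv.apply_symm_apply]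

lemma orbitDomainEquiv_symm_eq {v : G → X} (hv : v ∈ closedOrbitGraph σ) :
    ((orbitDomainEquiv σ hA).symm ⟨v 1, mem_orbitDomain σ hv⟩ : G → X) = v := by
  have : (orbitDomainEquiv σ hA).symm ⟨v 1, mem_orbitDomain σ hv⟩ = ⟨v, hv⟩ :=
    (LinearEquiv.symm_apply_eq _).2 rfl
  rw [this]

def orbitRep (g : G) : Module.End ℝ (orbitDomain σ) :=
  (orbitDomainEquiv σ hA).conj
    ((rightShift g).toLinearMap.restrict fun _ hv => rightShift_mem_closedOrbitGraph σ g hv)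

lemma coe_orbitRep_apply (g : G) (x : orbitDomain σ) :
    (orbitRep σ hA g x : X) = ((orbitDomainEquiv σ hA).symm x : G → X) g := by
  simp [orbitRep, LinearEquiv.conj_apply, orbitDomainEquiv_apply, rightShift_apply]

lemma orbitDomainEquiv_symm_orbitRep (g : G) (x : orbitDomain σ) :
    ((orbitDomainEquiv σ hA).symm (orbitRep σ hA g x) : G → X)
      = rightShift g ((orbitDomainEquiv σ hA).symm x) := by
  simp [orbitRep, LinearEquiv.conj_apply]

lemma orbitRep_one : orbitRep σ hA 1 = 1 := by
  ext x
  simp [coe_orbitRep_apply, orbitDomainEquiv_symm_apply_one]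

lemma orbitRep_mul (g h : G) : orbitRep σ hA (g * h) = orbitRep σ hA g * orbitRep σ hA h := by
  ext x
  simp [coe_orbitRep_apply, orbitDomainEquiv_symm_orbitRep, rightShift_apply]

lemma orbitRep_eq_neg_one {z : G} (hz : σ z = -1) : orbitRep σ hA z = -1 := by
  ext x
  have h := congrFun (rightShift_eq_neg σ hz ((orbitDomainEquiv σ hA).symm x).2) 1
  rw [rightShift_apply, one_mul] at h
  simp [coe_orbitRep_apply, h, orbitDomainEquiv_symm_apply_one]


lemma orbitRep_closed (x : ℕ → orbitDomain σ) (w : G → X)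
    (hw : ∀ g, Tendsto (fun n => (orbitRep σ hA g (x n) : X)) atTop (𝓝 (w g))) :
    ∃ z : orbitDomain σ, ∀ g, w g = orbitRep σ hA g z := by
  have hw_mem : w ∈ closedOrbitGraph σ :=
    (Submodule.isClosed_topologicalClosure _).mem_of_tendsto
      (tendsto_pi_nhds.2 fun g => by simpa only [coe_orbitRep_apply] using hw g)
      (Eventually.of_forall fun n => ((orbitDomainEquiv σ hA).symm (x n)).2)
  refine ⟨⟨w 1, mem_orbitDomain σ hw_mem⟩, fun g => ?_⟩
  rw [coe_orbitRep_apply, orbitDomainEquiv_symm_eq σ hA hw_mem]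

lemma comp_mem_orbitBoundedDual [Finite G] (h : StrongDual ℝ X) {T : X →L[ℝ] X}
    (hT : T ∈ AF 𝒜) : h.comp T ∈ orbitBoundedDual (orbitDomain σ) (orbitRep σ hA) := by
  obtain ⟨C, hC⟩ := (Set.finite_range fun g => ‖h.comp (boundedComp (σ g) hT)‖).bddAbove
  refine ⟨C, fun g x => ?_⟩
  have hv := ((orbitDomainEquiv σ hA).symm x).2
  calc |h.comp T (orbitRep σ hA g x : X)| = ‖h.comp (boundedComp (σ g) hT) x‖ := by
        rw [coe_orbitRep_apply, ContinuousLinearMap.comp_apply, apply_eq_boundedComp σ hv g hT,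
          orbitDomainEquiv_symm_apply_one, Real.norm_eq_abs]
        rfl
    _ ≤ ‖h.comp (boundedComp (σ g) hT)‖ * ‖(x : X)‖ := (h.comp _).le_opNorm _
    _ ≤ C * ‖(x : X)‖ := mul_le_mul_of_nonneg_right (hC ⟨g, rfl⟩) (norm_nonneg _)

lemma exists_mem_orbitBoundedDual_apply_ne_zero [Finite G] {v : X} (hv : v ≠ 0) :
    ∃ f ∈ orbitBoundedDual (orbitDomain σ) (orbitRep σ hA), f v ≠ 0 := by
  obtain ⟨T, hT, hTv⟩ := hA.exists_mem_AF_apply_ne_zero hv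
  obtain ⟨h, hh⟩ := SeparatingDual.exists_ne_zero (R := ℝ) hTv
  exact ⟨h.comp T, comp_mem_orbitBoundedDual σ hA h hT, hh⟩

lemma exists_orbitRep_apply_eq {T : X →L[ℝ] X} (hT : T ∈ A) (x : orbitDomain σ) :
    ∃ y : orbitDomain σ, (y : X) = T x ∧ ∀ g, T (orbitRep σ hA g x : X) = orbitRep σ hA g y := by
  have hTv := map_apply_mem_closedOrbitGraph σ hA hT ((orbitDomainEquiv σ hA).symm x).2
  refine ⟨⟨_, mem_orbitDomain σ hTv⟩, by simp [orbitDomainEquiv_symm_apply_one], fun g => ?_⟩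
  rw [coe_orbitRep_apply, coe_orbitRep_apply, orbitDomainEquiv_symm_eq σ hA hTv]

end OrbitGraph

def quaternionRep {A : NonUnitalSubalgebra ℝ (X →L[ℝ] X)} (hA : IsLSet (A : Set (X →L[ℝ] X)))
    (σ : QuaternionGroup 2 →* DD (A : Set (X →L[ℝ] X))) (hσ : σ (QuaternionGroup.a 2) = -1) :
    QRep X where
  domain := orbitDomain σ
  dense' := hA.dense_XF.mono (XF_le_orbitDomain σ)
  pi := orbitRep σ hA
  pi_one := orbitRep_one σ hA
  pi_mul := orbitRep_mul σ hA
  pi_neg_one := orbitRep_eq_neg_one σ hA hσ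

theorem stmt17_general {X : Type*} [NormedAddCommGroup X] [NormedSpace ℝ X]
    (A : NonUnitalSubalgebra ℝ (X →L[ℝ] X))
    (hA : IsLSet (A : Set (X →L[ℝ] X)))
    (hQ : QuaternionType (A : Set (X →L[ℝ] X))) :
    ∃ ρ : QRep X, QRepClosed ρ ∧ QRepRegular ρ ∧ (A : Set (X →L[ℝ] X)) ⊆ AlgPi ρ := by
  obtain ⟨e⟩ := hQ
  let σ := (e.symm : Quaternion ℝ →* DD (A : Set (X →L[ℝ] X))).comp QuaternionGroup.toQuaternion
  have hσ : σ (QuaternionGroup.a 2) = -1 := by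
    simp [σ, QuaternionGroup.toQuaternion_a_two]
  exact ⟨quaternionRep hA σ hσ, orbitRep_closed σ hA,
    .of_separating _ fun v hv => exists_mem_orbitBoundedDual_apply_ne_zero σ hA hv,
    fun T hT => exists_orbitRep_apply_eq σ hA hT⟩

/-- Every L-algebra of quaternion type is contained in `𝒜_π` for some
closed and regular representation `π` of the quaternion group on a dense subspace
of `X` with `π(1) = id` and `π(-1) = -id`. -/
theorem stmt17 {X : Type*} [NormedAddCommGroup X] [NormedSpace ℝ X] [CompleteSpace X]
    (hinf : ¬ FiniteDimensional ℝ X)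
    (A : NonUnitalSubalgebra ℝ (X →L[ℝ] X))
    (hA : IsLSet (A : Set (X →L[ℝ] X)))
    (hQ : QuaternionType (A : Set (X →L[ℝ] X))) :
    ∃ ρ : QRep X, QRepClosed ρ ∧ QRepRegular ρ ∧ (A : Set (X →L[ℝ] X)) ⊆ AlgPi ρ :=
  stmt17_general A hA hQ

end
end
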